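/- arXiv:math/0305273 — 4 statements merged into one kernel-verified Lean document; each statement's English description precedes it below -/
import Mathlib

section
/- Let c < d be real numbers, Λ ⊆ ℝ an interval, and f : [c,d] × Λ → (0,∞) a jointly continuous positive function such that ∂f/∂λ exists and is jointly continuous, and ∂f/∂λ(x,λ) = f(x,λ)·g(x,λ) where for each λ the function x ↦ g(x,λ) is strictly increasing on [c,d]. Then for every x ∈ (c,d), the function λ ↦ h(x,λ) := (∫_x^d f(y,λ) dy)/(∫_c^x f(y,λ) dy) is strictly increasing on Λ. -/
/-!
Write `A λ = ∫_c^x f(·, λ)` and `B λ = ∫_x^d f(·, λ)`. Differentiating under the integral sign,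
`A' = ∫_c^x f g` and `B' = ∫_x^d f g`. As `g(·, λ)` is strictly increasing, these `f`-weighted
integrals of `g` satisfy `A' < g(x, λ) A` and `B' > g(x, λ) B`, hence
`(B / A)' = (B' A - B A') / A² > 0` on the interior of the interval `Λ`.
-/

open Set intervalIntegral MeasureTheory Metric Function

section ParametricIntervalIntegral

variable {F F' : ℝ → ℝ → ℝ} {Λ : Set ℝ} {a b : ℝ}

theorem continuousOn_intervalIntegral_of_continuousOn_prod
    (hF : ContinuousOn (uncurry F) (uIcc a b ×ˢ Λ)) :
    ContinuousOn (fun l => ∫ y in a..b, F y l) Λ := by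
  -- clamping `y` to `[a, b]` gives a jointly continuous integrand on `Λ × ℝ`
  let G : Λ → ℝ → ℝ := fun l y => F (projIcc (min a b) (max a b) min_le_max y) l
  have hclamp : Continuous fun p : Λ × ℝ =>
      ((projIcc (min a b) (max a b) min_le_max p.2 : ℝ), (p.1 : ℝ)) := by fun_prop
  have hG : Continuous (uncurry G) := hF.comp_continuous hclamp fun p => ⟨Subtype.prop _, p.1.2⟩
  rw [continuousOn_iff_continuous_domRestrict]
  refine (continuous_parametric_intervalIntegral_of_continuous' (μ := volume) hG a b).congr
    fun l => integral_congr fun y hy => ?_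
  simp only [G, projIcc_of_mem _ hy]

theorem hasDerivAt_intervalIntegral_of_hasDerivWithinAt
    (hF : ∀ l ∈ Λ, ContinuousOn (F · l) (uIcc a b))
    (hF' : ContinuousOn (uncurry F') (uIcc a b ×ˢ Λ))
    (hderiv : ∀ y ∈ uIcc a b, ∀ l ∈ Λ, HasDerivWithinAt (F y) (F' y l) Λ l)
    {l₀ : ℝ} (hl₀ : l₀ ∈ interior Λ) :
    HasDerivAt (fun l => ∫ y in a..b, F y l) (∫ y in a..b, F' y l₀) l₀ := by
  have hΛ : Λ ∈ nhds l₀ := mem_interior_iff_mem_nhds.1 hl₀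
  obtain ⟨ε, hε, hball⟩ := nhds_basis_closedBall.mem_iff.1 hΛ
  obtain ⟨M, hM⟩ := (isCompact_uIcc.prod (isCompact_closedBall l₀ ε)).exists_bound_of_continuousOn
      (hF'.mono (prod_mono_right hball))
  have hl₀Λ : l₀ ∈ Λ := interior_subset hl₀
  have hmeas : ∀ {φ : ℝ → ℝ}, ContinuousOn φ (uIcc a b) →
      AEStronglyMeasurable φ (volume.restrict (uIoc a b)) := fun hφ =>
    (hφ.mono uIoc_subset_uIcc).aestronglyMeasurable measurableSet_uIoc
  refine (hasDerivAt_integral_of_dominated_loc_of_deriv_le (F := fun l y => F y l)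
      (F' := fun l y => F' y l) (bound := fun _ => M) (ball_mem_nhds l₀ hε) ?_
      (hF l₀ hl₀Λ).intervalIntegrable (hmeas (φ := (F' · l₀)) (hF'.uncurry_right l₀ hl₀Λ)) ?_
      intervalIntegrable_const ?_).2
  · filter_upwards [hΛ] with l hl using hmeas (hF l hl)
  · exact ae_of_all _ fun y hy l hl =>
      hM (y, l) ⟨uIoc_subset_uIcc hy, ball_subset_closedBall hl⟩
  · exact ae_of_all _ fun y hy l hl =>
      (hderiv y (uIoc_subset_uIcc hy) l (hball (ball_subset_closedBall hl))).hasDerivAt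
        (Filter.mem_of_superset (isOpen_ball.mem_nhds hl) (ball_subset_closedBall.trans hball))

end ParametricIntervalIntegral

theorem intervalIntegral_lt_intervalIntegral_of_forall_lt {u v : ℝ → ℝ} {a b : ℝ} (hab : a < b)
    (hu : IntervalIntegrable u volume a b) (hv : IntervalIntegrable v volume a b)
    (h : ∀ y ∈ Ioo a b, u y < v y) : ∫ y in a..b, u y < ∫ y in a..b, v y := by
  have := intervalIntegral_pos_of_pos_on (hv.sub hu) (fun y hy => sub_pos.2 (h y hy)) hab
  rwa [integral_sub hv hu, sub_pos] at this

theorem intervalIntegral_mul_mem_Ioo_of_strictMonoOn {u g : ℝ → ℝ} {a b : ℝ} (hab : a < b)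
    (hu_pos : ∀ y ∈ Ioo a b, 0 < u y) (hg : StrictMonoOn g (Icc a b))
    (hu : IntervalIntegrable u volume a b)
    (hug : IntervalIntegrable (fun y => u y * g y) volume a b) :
    ∫ y in a..b, u y * g y ∈ Ioo (g a * ∫ y in a..b, u y) (g b * ∫ y in a..b, u y) := by
  simp only [← intervalIntegral.integral_const_mul, mem_Ioo]
  constructor
  · refine intervalIntegral_lt_intervalIntegral_of_forall_lt hab (hu.const_mul _) hug
      fun y hy => ?_
    rw [mul_comm]
    exact mul_lt_mul_of_pos_left (hg (left_mem_Icc.2 hab.le) (Ioo_subset_Icc_self hy) hy.1)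
      (hu_pos y hy)
  · refine intervalIntegral_lt_intervalIntegral_of_forall_lt hab hug (hu.const_mul _)
      fun y hy => ?_
    rw [mul_comm (g b)]
    exact mul_lt_mul_of_pos_left (hg (Ioo_subset_Icc_self hy) (right_mem_Icc.2 hab.le) hy.2)
      (hu_pos y hy)

theorem intervalIntegral_pos_and_mul_mem_Ioo_of_continuousOn {u g : ℝ → ℝ} {a b : ℝ}
    (hab : a < b) (hu_pos : ∀ y ∈ Icc a b, 0 < u y) (hg : StrictMonoOn g (Icc a b))
    (hu : ContinuousOn u (Icc a b)) (hug : ContinuousOn (fun y => u y * g y) (Icc a b)) :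
    0 < ∫ y in a..b, u y ∧
      ∫ y in a..b, u y * g y ∈ Ioo (g a * ∫ y in a..b, u y) (g b * ∫ y in a..b, u y) := by
  rw [← uIcc_of_le hab.le] at hu hug
  have hu_pos' : ∀ y ∈ Ioo a b, 0 < u y := fun y hy => hu_pos y (Ioo_subset_Icc_self hy)
  exact ⟨intervalIntegral_pos_of_pos_on hu.intervalIntegrable hu_pos' hab,
    intervalIntegral_mul_mem_Ioo_of_strictMonoOn hab hu_pos' hg hu.intervalIntegrable
      hug.intervalIntegrable⟩

theorem monotone_ratio_increasing_general (c d : ℝ)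
    (Λ : Set ℝ) (hΛ : Λ.OrdConnected)
    (f g : ℝ → ℝ → ℝ)
    (hf_cont : ContinuousOn (fun p : ℝ × ℝ => f p.1 p.2) (Icc c d ×ˢ Λ))
    (hf_pos : ∀ x ∈ Icc c d, ∀ l ∈ Λ, 0 < f x l)
    (hf_deriv : ∀ x ∈ Icc c d, ∀ l ∈ Λ,
      HasDerivWithinAt (fun t => f x t) (f x l * g x l) Λ l)
    (hderiv_cont : ContinuousOn (fun p : ℝ × ℝ => f p.1 p.2 * g p.1 p.2) (Icc c d ×ˢ Λ))
    (hg_mono : ∀ l ∈ Λ, StrictMonoOn (fun x => g x l) (Icc c d)) :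
    ∀ x ∈ Ioo c d,
      StrictMonoOn (fun l => (∫ y in x..d, f y l) / (∫ y in c..x, f y l)) Λ := by
  intro x hx
  have hcx : Icc c x ⊆ Icc c d := Icc_subset_Icc_right hx.2.le
  have hxd : Icc x d ⊆ Icc c d := Icc_subset_Icc_left hx.1.le
  have hmass {a b : ℝ} (hab : a < b) (hsub : Icc a b ⊆ Icc c d) {l : ℝ} (hl : l ∈ Λ) :=
    intervalIntegral_pos_and_mul_mem_Ioo_of_continuousOn hab (fun y hy => hf_pos y (hsub hy) l hl)
      ((hg_mono l hl).mono hsub) ((hf_cont.uncurry_right l hl).mono hsub)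
      ((hderiv_cont.uncurry_right (f := fun y t => f y t * g y t) l hl).mono hsub)
  have hcont {a b : ℝ} (hab : a ≤ b) (hsub : Icc a b ⊆ Icc c d) :=
    continuousOn_intervalIntegral_of_continuousOn_prod
      (hf_cont.mono (prod_mono_left ((uIcc_of_le hab).trans_subset hsub)))
  refine strictMonoOn_of_deriv_pos hΛ.convex ((hcont hx.2.le hxd).div (hcont hx.1.le hcx)
    fun l hl => (hmass hx.1 hcx hl).1.ne') fun l hl => ?_
  have hderiv {a b : ℝ} (hab : a ≤ b) (hsub : Icc a b ⊆ Icc c d) :=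
    have hsub' := (uIcc_of_le hab).trans_subset hsub
    hasDerivAt_intervalIntegral_of_hasDerivWithinAt (F' := fun y t => f y t * g y t)
      (fun t ht => (hf_cont.uncurry_right t ht).mono hsub')
      (hderiv_cont.mono (prod_mono_left hsub'))
      (fun y hy => hf_deriv y (hsub' hy)) hl
  obtain ⟨hA, -, hA'⟩ := hmass hx.1 hcx (interior_subset hl)
  obtain ⟨hB, hB', -⟩ := hmass hx.2 hxd (interior_subset hl)
  have hquot : HasDerivAt (fun l => (∫ y in x..d, f y l) / ∫ y in c..x, f y l) _ l :=
    (hderiv hx.2.le hxd).div (hderiv hx.1.le hcx) hA.ne'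
  rw [hquot.deriv]
  -- `B' A - B A' > g(x) B A - B g(x) A = 0`
  exact div_pos (by nlinarith) (by positivity)

theorem monotone_ratio_increasing (c d : ℝ) (hcd : c < d)
    (Λ : Set ℝ) (hΛ : Λ.OrdConnected)
    (f g : ℝ → ℝ → ℝ)
    (hf_cont : ContinuousOn (fun p : ℝ × ℝ => f p.1 p.2) (Icc c d ×ˢ Λ))
    (hf_pos : ∀ x ∈ Icc c d, ∀ l ∈ Λ, 0 < f x l)
    (hf_deriv : ∀ x ∈ Icc c d, ∀ l ∈ Λ,
      HasDerivWithinAt (fun t => f x t) (f x l * g x l) Λ l)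
    (hderiv_cont : ContinuousOn (fun p : ℝ × ℝ => f p.1 p.2 * g p.1 p.2) (Icc c d ×ˢ Λ))
    (hg_mono : ∀ l ∈ Λ, StrictMonoOn (fun x => g x l) (Icc c d)) :
    ∀ x ∈ Ioo c d,
      StrictMonoOn (fun l => (∫ y in x..d, f y l) / (∫ y in c..x, f y l)) Λ :=
  monotone_ratio_increasing_general c d Λ hΛ f g hf_cont hf_pos hf_deriv hderiv_cont hg_mono
end

section
/- Under the hypotheses of the previous statement but with x ↦ g(x,λ) strictly decreasing on [c,d] for each λ, the function λ ↦ h(x,λ) = (∫_x^d f(y,λ) dy)/(∫_c^x f(y,λ) dy) is strictly decreasing on Λ for every x ∈ (c,d). -/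
/-!
Fix `l₁ < l₂` in `Λ`. For `w₁ < w₂` the function `t ↦ log f(w₂,t) - log f(w₁,t)` has derivative
`g(w₂,t) - g(w₁,t) < 0` on `Λ`, so the likelihood ratio `r(y) = f(y,l₂) / f(y,l₁)` is strictly
decreasing in `y`. With `K = r(x)` this gives `f(·,l₂) < K f(·,l₁)` to the right of `x` and
`f(·,l₂) > K f(·,l₁)` to the left of `x`; integrating, the numerator at `l₂` is below `K` times the
numerator at `l₁`, while the denominator at `l₂` is above `K` times the denominator at `l₁`.
-/

open Set intervalIntegral

theorem strictAntiOn_div_of_hasDerivWithinAt_mul {S Λ : Set ℝ} (hΛ : Λ.OrdConnected)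
    {f g : ℝ → ℝ → ℝ} (hf_pos : ∀ x ∈ S, ∀ l ∈ Λ, 0 < f x l)
    (hf_deriv : ∀ x ∈ S, ∀ l ∈ Λ, HasDerivWithinAt (fun t => f x t) (f x l * g x l) Λ l)
    (hg_mono : ∀ l ∈ Λ, StrictAntiOn (fun x => g x l) S)
    {l₁ l₂ : ℝ} (hl₁ : l₁ ∈ Λ) (hl₂ : l₂ ∈ Λ) (hl : l₁ < l₂) :
    StrictAntiOn (fun x => f x l₂ / f x l₁) S := by
  intro w₁ hw₁ w₂ hw₂ hw
  have hlog : ∀ w ∈ S, ∀ t ∈ Λ, HasDerivWithinAt (fun s => Real.log (f w s)) (g w t) Λ t := by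
    intro w hw t ht
    have hpos := hf_pos w hw t ht
    simpa [mul_div_cancel_left₀ _ hpos.ne'] using (hf_deriv w hw t ht).log hpos.ne'
  have hdiff : ∀ t ∈ Λ, HasDerivWithinAt (fun s => Real.log (f w₂ s) - Real.log (f w₁ s))
      (g w₂ t - g w₁ t) Λ t := fun t ht => (hlog w₂ hw₂ t ht).sub (hlog w₁ hw₁ t ht)
  have hanti : StrictAntiOn (fun s => Real.log (f w₂ s) - Real.log (f w₁ s)) Λ :=
    strictAntiOn_of_hasDerivWithinAt_neg hΛ.convex
      (fun t ht => (hdiff t ht).continuousWithinAt)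
      (fun t ht => (hdiff t (interior_subset ht)).mono interior_subset)
      (fun t ht => sub_neg.2 (hg_mono t (interior_subset ht) hw₁ hw₂ hw))
  have hlt := hanti hl₁ hl₂ hl
  rw [← Real.log_lt_log_iff (div_pos (hf_pos w₂ hw₂ l₂ hl₂) (hf_pos w₂ hw₂ l₁ hl₁))
    (div_pos (hf_pos w₁ hw₁ l₂ hl₂) (hf_pos w₁ hw₁ l₁ hl₁))]
  simp only [Real.log_div (hf_pos _ hw₂ _ hl₂).ne' (hf_pos _ hw₂ _ hl₁).ne',
    Real.log_div (hf_pos _ hw₁ _ hl₂).ne' (hf_pos _ hw₁ _ hl₁).ne']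
  linarith

theorem integral_div_integral_lt_of_strictAntiOn_div {u v : ℝ → ℝ} {c x d : ℝ}
    (hx : x ∈ Ioo c d) (hu : ContinuousOn u (Icc c d)) (hv : ContinuousOn v (Icc c d))
    (hu_pos : ∀ y ∈ Icc c d, 0 < u y) (hvx : 0 < v x)
    (hvu : StrictAntiOn (fun y => v y / u y) (Icc c d)) :
    (∫ y in x..d, v y) / (∫ y in c..x, v y) < (∫ y in x..d, u y) / (∫ y in c..x, u y) := by
  obtain ⟨hcx, hxd⟩ := hx
  have hxI : x ∈ Icc c d := ⟨hcx.le, hxd.le⟩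
  have hcI : c ∈ Icc c d := left_mem_Icc.2 (hcx.trans hxd).le
  have hdI : d ∈ Icc c d := right_mem_Icc.2 (hcx.trans hxd).le
  have hR : Icc x d ⊆ Icc c d := Icc_subset_Icc_left hcx.le
  have hL : Icc c x ⊆ Icc c d := Icc_subset_Icc_right hxd.le
  set K := v x / u x
  have hK : 0 < K := div_pos hvx (hu_pos x hxI)
  have hv_le : ∀ y ∈ Ioc x d, v y ≤ K * u y := fun y hy =>
    (div_le_iff₀ (hu_pos y (hR (Ioc_subset_Icc_self hy)))).1
      (hvu.antitoneOn hxI (hR (Ioc_subset_Icc_self hy)) hy.1.le)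
  have hv_ge : ∀ y ∈ Icc c x, K * u y ≤ v y := fun y hy =>
    (le_div_iff₀ (hu_pos y (hL hy))).1 (hvu.antitoneOn (hL hy) hxI hy.2)
  have hN : ∫ y in x..d, v y < K * ∫ y in x..d, u y := by
    rw [← integral_const_mul]
    exact integral_lt_integral_of_continuousOn_of_le_of_exists_lt hxd (hv.mono hR)
      ((hu.mono hR).const_mul K) hv_le
      ⟨d, right_mem_Icc.2 hxd.le, (div_lt_iff₀ (hu_pos d hdI)).1 (hvu hxI hdI hxd)⟩
  have hD : K * ∫ y in c..x, u y < ∫ y in c..x, v y := by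
    rw [← integral_const_mul]
    exact integral_lt_integral_of_continuousOn_of_le_of_exists_lt hcx ((hu.mono hL).const_mul K)
      (hv.mono hL) (fun y hy => hv_ge y (Ioc_subset_Icc_self hy))
      ⟨c, left_mem_Icc.2 hcx.le, (lt_div_iff₀ (hu_pos c hcI)).1 (hvu hcI hxI hcx)⟩
  have hN₁ : 0 < ∫ y in x..d, u y := intervalIntegral_pos_of_pos_on
    ((hu.mono hR).intervalIntegrable_of_Icc hxd.le)
    (fun y hy => hu_pos y (hR (Ioo_subset_Icc_self hy))) hxd
  have hD₁ : 0 < ∫ y in c..x, u y := intervalIntegral_pos_of_pos_on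
    ((hu.mono hL).intervalIntegrable_of_Icc hcx.le)
    (fun y hy => hu_pos y (hL (Ioo_subset_Icc_self hy))) hcx
  rw [div_lt_div_iff₀ ((mul_pos hK hD₁).trans hD) hD₁]
  calc (∫ y in x..d, v y) * ∫ y in c..x, u y
      < (K * ∫ y in x..d, u y) * ∫ y in c..x, u y := by gcongr
    _ = (∫ y in x..d, u y) * (K * ∫ y in c..x, u y) := by ring
    _ < (∫ y in x..d, u y) * ∫ y in c..x, v y := by gcongr

theorem monotone_ratio_decreasing_general (c d : ℝ)
    (Λ : Set ℝ) (hΛ : Λ.OrdConnected)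
    (f g : ℝ → ℝ → ℝ)
    (hf_cont : ContinuousOn (fun p : ℝ × ℝ => f p.1 p.2) (Icc c d ×ˢ Λ))
    (hf_pos : ∀ x ∈ Icc c d, ∀ l ∈ Λ, 0 < f x l)
    (hf_deriv : ∀ x ∈ Icc c d, ∀ l ∈ Λ,
      HasDerivWithinAt (fun t => f x t) (f x l * g x l) Λ l)
    (hg_mono : ∀ l ∈ Λ, StrictAntiOn (fun x => g x l) (Icc c d)) :
    ∀ x ∈ Ioo c d,
      StrictAntiOn (fun l => (∫ y in x..d, f y l) / (∫ y in c..x, f y l)) Λ := by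
  intro x hx l₁ hl₁ l₂ hl₂ hl
  exact integral_div_integral_lt_of_strictAntiOn_div hx (hf_cont.uncurry_right l₁ hl₁)
    (hf_cont.uncurry_right l₂ hl₂) (fun y hy => hf_pos y hy l₁ hl₁)
    (hf_pos x (Ioo_subset_Icc_self hx) l₂ hl₂)
    (strictAntiOn_div_of_hasDerivWithinAt_mul hΛ hf_pos hf_deriv hg_mono hl₁ hl₂ hl)

theorem monotone_ratio_decreasing (c d : ℝ) (hcd : c < d)
    (Λ : Set ℝ) (hΛ : Λ.OrdConnected)
    (f g : ℝ → ℝ → ℝ)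
    (hf_cont : ContinuousOn (fun p : ℝ × ℝ => f p.1 p.2) (Icc c d ×ˢ Λ))
    (hf_pos : ∀ x ∈ Icc c d, ∀ l ∈ Λ, 0 < f x l)
    (hf_deriv : ∀ x ∈ Icc c d, ∀ l ∈ Λ,
      HasDerivWithinAt (fun t => f x t) (f x l * g x l) Λ l)
    (hderiv_cont : ContinuousOn (fun p : ℝ × ℝ => f p.1 p.2 * g p.1 p.2) (Icc c d ×ˢ Λ))
    (hg_mono : ∀ l ∈ Λ, StrictAntiOn (fun x => g x l) (Icc c d)) :
    ∀ x ∈ Ioo c d,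
      StrictAntiOn (fun l => (∫ y in x..d, f y l) / (∫ y in c..x, f y l)) Λ :=
  monotone_ratio_decreasing_general c d Λ hΛ f g hf_cont hf_pos hf_deriv hg_mono
end

section
/- Let c < d, Λ ⊆ ℝ an interval, f : [c,d] × Λ → (0,∞) continuous with jointly continuous λ-derivative. Suppose ∂f/∂λ(x,λ) = f(x,λ)·g(x,λ) with g(·,λ) strictly increasing in x. Then for any x ∈ (c,d) and λ ∈ Λ the strict inequalities hold: g(x,λ)·∫_x^d f(y,λ) dy < ∫_x^d (∂f/∂λ)(y,λ) dy < g(d,λ)·∫_x^d f(y,λ) dy, and g(c,λ)·∫_c^x f(y,λ) dy < ∫_c^x (∂f/∂λ)(y,λ) dy < g(x,λ)·∫_c^x f(y,λ) dy. -/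
open Set intervalIntegral

theorem ratio_integral_inequalities (c d : ℝ) (hcd : c < d)
    (Λ : Set ℝ) (hΛ : Λ.OrdConnected)
    (f g : ℝ → ℝ → ℝ)
    (hf_cont : ContinuousOn (fun p : ℝ × ℝ => f p.1 p.2) (Icc c d ×ˢ Λ))
    (hf_pos : ∀ x ∈ Icc c d, ∀ l ∈ Λ, 0 < f x l)
    (hf_deriv : ∀ x ∈ Icc c d, ∀ l ∈ Λ,
      HasDerivWithinAt (fun t => f x t) (f x l * g x l) Λ l)
    (hderiv_cont : ContinuousOn (fun p : ℝ × ℝ => f p.1 p.2 * g p.1 p.2) (Icc c d ×ˢ Λ))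
    (hg_mono : ∀ l ∈ Λ, StrictMonoOn (fun x => g x l) (Icc c d)) :
    ∀ x ∈ Ioo c d, ∀ l ∈ Λ,
      (g x l * ∫ y in x..d, f y l) < (∫ y in x..d, f y l * g y l) ∧
      (∫ y in x..d, f y l * g y l) < g d l * ∫ y in x..d, f y l ∧
      (g c l * ∫ y in c..x, f y l) < (∫ y in c..x, f y l * g y l) ∧
      (∫ y in c..x, f y l * g y l) < g x l * ∫ y in c..x, f y l := by
  intro x hx l hl
  have hFc : ContinuousOn (fun y => f y l) (Icc c d) := by
    have : ContinuousOn (fun y : ℝ => ((y, l) : ℝ × ℝ)) (Icc c d) :=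
      (continuous_id.prodMk continuous_const).continuousOn
    exact hf_cont.comp this (fun y hy => ⟨hy, hl⟩)
  have hGc : ContinuousOn (fun y => f y l * g y l) (Icc c d) := by
    have : ContinuousOn (fun y : ℝ => ((y, l) : ℝ × ℝ)) (Icc c d) :=
      (continuous_id.prodMk continuous_const).continuousOn
    exact hderiv_cont.comp this (fun y hy => ⟨hy, hl⟩)
  have key1 : ∀ a b : ℝ, a ∈ Icc c d → b ∈ Icc c d → a < b → ∀ k : ℝ,
      (∀ y ∈ Ioo a b, k < g y l) →
      k * (∫ y in a..b, f y l) < ∫ y in a..b, f y l * g y l := by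
    intro a b ha hb hab k hk
    have hsub : uIcc a b ⊆ Icc c d := by
      rw [uIcc_of_le hab.le]
      exact Icc_subset_Icc ha.1 hb.2
    have hFi : IntervalIntegrable (fun y => f y l) MeasureTheory.volume a b :=
      (hFc.mono hsub).intervalIntegrable
    have hGi : IntervalIntegrable (fun y => f y l * g y l) MeasureTheory.volume a b :=
      (hGc.mono hsub).intervalIntegrable
    have hpos : 0 < ∫ y in a..b, (f y l * g y l - k * f y l) := by
      apply intervalIntegral.intervalIntegral_pos_of_pos_on
        (hGi.sub (hFi.const_mul k))
      · intro y hy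
        have hyI : y ∈ Icc c d := ⟨ha.1.trans hy.1.le, hy.2.le.trans hb.2⟩
        have hfp := hf_pos y hyI l hl
        have := hk y hy
        nlinarith
      · exact hab
    rw [intervalIntegral.integral_sub hGi (hFi.const_mul k),
      intervalIntegral.integral_const_mul] at hpos
    linarith
  have key2 : ∀ a b : ℝ, a ∈ Icc c d → b ∈ Icc c d → a < b → ∀ k : ℝ,
      (∀ y ∈ Ioo a b, g y l < k) →
      (∫ y in a..b, f y l * g y l) < k * ∫ y in a..b, f y l := by
    intro a b ha hb hab k hk
    have hsub : uIcc a b ⊆ Icc c d := by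
      rw [uIcc_of_le hab.le]
      exact Icc_subset_Icc ha.1 hb.2
    have hFi : IntervalIntegrable (fun y => f y l) MeasureTheory.volume a b :=
      (hFc.mono hsub).intervalIntegrable
    have hGi : IntervalIntegrable (fun y => f y l * g y l) MeasureTheory.volume a b :=
      (hGc.mono hsub).intervalIntegrable
    have hpos : 0 < ∫ y in a..b, (k * f y l - f y l * g y l) := by
      apply intervalIntegral.intervalIntegral_pos_of_pos_on
        ((hFi.const_mul k).sub hGi)
      · intro y hy
        have hyI : y ∈ Icc c d := ⟨ha.1.trans hy.1.le, hy.2.le.trans hb.2⟩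
        have hfp := hf_pos y hyI l hl
        have := hk y hy
        nlinarith
      · exact hab
    rw [intervalIntegral.integral_sub (hFi.const_mul k) hGi,
      intervalIntegral.integral_const_mul] at hpos
    linarith
  have hxI : x ∈ Icc c d := ⟨hx.1.le, hx.2.le⟩
  have hcI : c ∈ Icc c d := ⟨le_refl c, hcd.le⟩
  have hdI : d ∈ Icc c d := ⟨hcd.le, le_refl d⟩
  have hmono := hg_mono l hl
  refine ⟨?_, ?_, ?_, ?_⟩
  · exact key1 x d hxI hdI hx.2 (g x l) (fun y hy =>
      hmono hxI ⟨hx.1.le.trans hy.1.le, hy.2.le⟩ hy.1)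
  · exact key2 x d hxI hdI hx.2 (g d l) (fun y hy =>
      hmono ⟨hx.1.le.trans hy.1.le, hy.2.le⟩ hdI hy.2)
  · exact key1 c x hcI hxI hx.1 (g c l) (fun y hy =>
      hmono hcI ⟨hy.1.le, hy.2.le.trans hx.2.le⟩ hy.1)
  · exact key2 c x hcI hxI hx.1 (g x l) (fun y hy =>
      hmono ⟨hy.1.le, hy.2.le.trans hx.2.le⟩ hxI hy.2)
end

section
/- For the Cox–Ingersoll–Ross family on an interval [c,d] with 0 < c < d < α and parameter m > 0, the function η(m,x) = (d−c)·(∫_c^x y^{−2αm} e^{2my} dy)/(∫_c^d y^{−2αm} e^{2my} dy) + c is, for every fixed x ∈ (c,d), a strictly increasing function of m. -/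
/-!
Write the integrand as `exp (2 m φ y)` with `φ y = y - α log y`, which is strictly decreasing on
`(0, α]`. Raising `m` to `m + δ` multiplies the density by the strictly decreasing factor
`exp (2 δ φ)`, so mass moves towards `c` and the fraction of it lying in `[c, x]` grows. For densities `p`, `q` with
`q / p` strictly decreasing this is seen by comparing with `e = q x / p x`: `q ≥ e p` on `[c, x]`,
strictly at `c`, and `q ≤ e p` on `[x, d]`, strictly at `d`; hence
`∫_c^x p · ∫_x^d q < e ∫_c^x p · ∫_x^d p < ∫_c^x q · ∫_x^d p`.
-/

open Set intervalIntegral Real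

lemma div_add_lt_div_add {A₁ B₁ A₂ B₂ : ℝ} (hA₁ : 0 < A₁) (hB₁ : 0 < B₁) (hA₂ : 0 < A₂)
    (hB₂ : 0 < B₂) (h : A₁ * B₂ < A₂ * B₁) : A₁ / (A₁ + B₁) < A₂ / (A₂ + B₂) := by
  rw [div_lt_div_iff₀ (by positivity) (by positivity)]
  linarith

lemma integral_pos_of_continuousOn {f : ℝ → ℝ} {a b : ℝ} (hab : a < b)
    (hf : ContinuousOn f (Icc a b)) (hf₀ : ∀ y ∈ Icc a b, 0 < f y) : 0 < ∫ y in a..b, f y :=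
  intervalIntegral_pos_of_pos_on (hf.intervalIntegrable_of_Icc hab.le)
    (fun y hy => hf₀ y (Ioo_subset_Icc_self hy)) hab

theorem intervalIntegral_div_lt_of_strictAntiOn_div {p q : ℝ → ℝ} {a b x : ℝ}
    (hx : x ∈ Ioo a b) (hp : ContinuousOn p (Icc a b)) (hq : ContinuousOn q (Icc a b))
    (hp₀ : ∀ y ∈ Icc a b, 0 < p y) (hq₀ : ∀ y ∈ Icc a b, 0 < q y)
    (hqp : StrictAntiOn (fun y => q y / p y) (Icc a b)) :
    (∫ y in a..x, p y) / (∫ y in a..b, p y) < (∫ y in a..x, q y) / (∫ y in a..b, q y) := by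
  obtain ⟨hax, hxb⟩ := hx
  have haI : a ∈ Icc a b := left_mem_Icc.2 (hax.trans hxb).le
  have hbI : b ∈ Icc a b := right_mem_Icc.2 (hax.trans hxb).le
  have hxI : x ∈ Icc a b := ⟨hax.le, hxb.le⟩
  have hsub₁ : Icc a x ⊆ Icc a b := Icc_subset_Icc_right hxb.le
  have hsub₂ : Icc x b ⊆ Icc a b := Icc_subset_Icc_left hax.le
  set e := q x / p x
  have hleft : e * ∫ y in a..x, p y < ∫ y in a..x, q y := by
    rw [← integral_const_mul]
    refine integral_lt_integral_of_continuousOn_of_le_of_exists_lt hax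
      (continuousOn_const.mul (hp.mono hsub₁)) (hq.mono hsub₁) (fun y hy => ?_)
      ⟨a, left_mem_Icc.2 hax.le, (lt_div_iff₀ (hp₀ a haI)).1 (hqp haI hxI hax)⟩
    have hyI := hsub₁ (Ioc_subset_Icc_self hy)
    exact (le_div_iff₀ (hp₀ y hyI)).1 (hqp.antitoneOn hyI hxI hy.2)
  have hright : ∫ y in x..b, q y < e * ∫ y in x..b, p y := by
    rw [← integral_const_mul]
    refine integral_lt_integral_of_continuousOn_of_le_of_exists_lt hxb
      (hq.mono hsub₂) (continuousOn_const.mul (hp.mono hsub₂)) (fun y hy => ?_)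
      ⟨b, right_mem_Icc.2 hxb.le, (div_lt_iff₀ (hp₀ b hbI)).1 (hqp hxI hbI hxb)⟩
    have hyI := hsub₂ (Ioc_subset_Icc_self hy)
    exact (div_le_iff₀ (hp₀ y hyI)).1 (hqp.antitoneOn hxI hyI hy.1.le)
  have hpa := integral_pos_of_continuousOn hax (hp.mono hsub₁) fun y hy => hp₀ y (hsub₁ hy)
  have hpb := integral_pos_of_continuousOn hxb (hp.mono hsub₂) fun y hy => hp₀ y (hsub₂ hy)
  have hqa := integral_pos_of_continuousOn hax (hq.mono hsub₁) fun y hy => hq₀ y (hsub₁ hy)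
  have hqb := integral_pos_of_continuousOn hxb (hq.mono hsub₂) fun y hy => hq₀ y (hsub₂ hy)
  rw [← integral_add_adjacent_intervals ((hp.mono hsub₁).intervalIntegrable_of_Icc hax.le)
      ((hp.mono hsub₂).intervalIntegrable_of_Icc hxb.le),
    ← integral_add_adjacent_intervals ((hq.mono hsub₁).intervalIntegrable_of_Icc hax.le)
      ((hq.mono hsub₂).intervalIntegrable_of_Icc hxb.le)]
  refine div_add_lt_div_add hpa hpb hqa hqb ?_
  calc (∫ y in a..x, p y) * ∫ y in x..b, q y
      < (∫ y in a..x, p y) * (e * ∫ y in x..b, p y) := mul_lt_mul_of_pos_left hright hpa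
    _ = (e * ∫ y in a..x, p y) * ∫ y in x..b, p y := by ring
    _ < (∫ y in a..x, q y) * ∫ y in x..b, p y := mul_lt_mul_of_pos_right hleft hpb

lemma continuousOn_sub_mul_log (α : ℝ) {s : Set ℝ} (hs : ∀ y ∈ s, y ≠ 0) :
    ContinuousOn (fun y => y - α * log y) s :=
  continuousOn_id.sub (continuousOn_const.mul (continuousOn_log.mono hs))

lemma strictAntiOn_sub_mul_log (α : ℝ) : StrictAntiOn (fun y => y - α * log y) (Ioc 0 α) := by
  refine strictAntiOn_of_deriv_neg (convex_Ioc 0 α) ?_ fun y hy => ?_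
  · exact continuousOn_sub_mul_log α fun y hy => hy.1.ne'
  · rw [interior_Ioc] at hy
    have hderiv : HasDerivAt (fun y => y - α * log y) (1 - α * y⁻¹) y :=
      (hasDerivAt_id y).sub ((hasDerivAt_log hy.1.ne').const_mul α)
    rw [hderiv.deriv, sub_neg, ← div_eq_mul_inv, one_lt_div hy.1]
    exact hy.2

lemma rpow_neg_mul_exp_eq_exp {y : ℝ} (hy : 0 < y) (α m : ℝ) :
    y ^ (-(2 * α * m)) * exp (2 * m * y) = exp (2 * m * (y - α * log y)) := by
  rw [rpow_def_of_pos hy, ← exp_add]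
  ring_nf

lemma integral_rpow_neg_mul_exp_eq {a b : ℝ} (ha : 0 < a) (hb : 0 < b) (α m : ℝ) :
    ∫ y in a..b, y ^ (-(2 * α * m)) * exp (2 * m * y) =
      ∫ y in a..b, exp (2 * m * (y - α * log y)) :=
  integral_congr fun _ hy =>
    rpow_neg_mul_exp_eq_exp (lt_of_lt_of_le (lt_min ha hb) hy.1) α m

theorem CIR_mean_exit_strictMono (α c d : ℝ)
    (hc : 0 < c) (hcd : c < d) (hdα : d < α) :
    ∀ x ∈ Ioo c d,
      StrictMonoOn (fun m =>
        (d - c) *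
          ((∫ y in c..x, y ^ (-(2 * α * m)) * Real.exp (2 * m * y)) /
            (∫ y in c..d, y ^ (-(2 * α * m)) * Real.exp (2 * m * y))) + c)
        (Ioi (0 : ℝ)) := by
  intro x hx m₁ _ m₂ _ hm
  set φ : ℝ → ℝ := fun y => y - α * log y
  have hφ : StrictAntiOn φ (Icc c d) :=
    (strictAntiOn_sub_mul_log α).mono fun y hy => ⟨hc.trans_le hy.1, hy.2.trans hdα.le⟩
  have hφc : ContinuousOn φ (Icc c d) :=
    continuousOn_sub_mul_log α fun y hy => (hc.trans_le hy.1).ne'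
  have hratio : StrictAntiOn (fun y => exp (2 * m₂ * φ y) / exp (2 * m₁ * φ y)) (Icc c d) := by
    intro y hy z hz hyz
    simp only [← exp_sub]
    exact exp_lt_exp.2 (by nlinarith [hφ hy hz hyz])
  have hshare := intervalIntegral_div_lt_of_strictAntiOn_div hx
    (continuousOn_const.mul hφc).rexp (continuousOn_const.mul hφc).rexp
    (fun _ _ => exp_pos _) (fun _ _ => exp_pos _) hratio
  have hx₀ : 0 < x := hc.trans hx.1
  have hd₀ : 0 < d := hc.trans hcd
  simp only [integral_rpow_neg_mul_exp_eq hc hx₀, integral_rpow_neg_mul_exp_eq hc hd₀]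
  exact add_lt_add_left (mul_lt_mul_of_pos_left hshare (sub_pos.2 hcd)) c
end
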